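/- The entropic optimal transport loss is coercive: 𝓛(θ_n) → +∞ along any sequence θ_n ∈ (ℝ^d)^K with ‖θ_n‖ → ∞; equivalently, 𝓛 tends to +∞ along the cocompact filter on (ℝ^d)^K. -/
import Mathlib


open MeasureTheory

/-- Gaussian density on `ℝ^d` with mean `μ` and covariance `σ² I_d`. -/
noncomputable def gaussDen (d : ℕ) (σ : ℝ) (μ y : EuclideanSpace ℝ (Fin d)) : ℝ :=
  (2 * Real.pi * σ ^ 2) ^ (-(d : ℝ) / 2) * Real.exp (-‖y - μ‖ ^ 2 / (2 * σ ^ 2))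

/-- A responsibility function: a measurable map into `[0,1]^K` whose coordinates sum to one. -/
def IsResp (K d : ℕ) (w : EuclideanSpace ℝ (Fin d) → Fin K → ℝ) : Prop :=
  (∀ k, Measurable fun y => w y k) ∧ (∀ y k, w y k ∈ Set.Icc (0 : ℝ) 1) ∧
    (∀ y, ∑ k, w y k = 1)

/-- The free energy `E_Q(w, θ)`. -/
noncomputable def freeEnergy (K d : ℕ) (σ : ℝ) (α : Fin K → ℝ)
    (Q : Measure (EuclideanSpace ℝ (Fin d)))
    (w : EuclideanSpace ℝ (Fin d) → Fin K → ℝ)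
    (θ : Fin K → EuclideanSpace ℝ (Fin d)) : ℝ :=
  ∫ y, (∑ k, w y k * (Real.log (w y k) - Real.log (α k * gaussDen d σ (θ k) y))) ∂Q

/-- The negative population log-likelihood `ℓ(θ)`. -/
noncomputable def negLogLik (K d : ℕ) (σ : ℝ) (α : Fin K → ℝ)
    (Q : Measure (EuclideanSpace ℝ (Fin d)))
    (θ : Fin K → EuclideanSpace ℝ (Fin d)) : ℝ :=
  -∫ y, Real.log (∑ k, α k * gaussDen d σ (θ k) y) ∂Q

/-- The entropic optimal transport loss `𝓛(θ)`: infimum of the free energy over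
responsibility functions satisfying the marginal constraints. -/
noncomputable def entLoss (K d : ℕ) (σ : ℝ) (α : Fin K → ℝ)
    (Q : Measure (EuclideanSpace ℝ (Fin d)))
    (θ : Fin K → EuclideanSpace ℝ (Fin d)) : ℝ :=
  sInf {r : ℝ | ∃ w, IsResp K d w ∧ (∀ k, ∫ y, w y k ∂Q = α k) ∧
    freeEnergy K d σ α Q w θ = r}

lemma gaussDen_pos (d : ℕ) {σ : ℝ} (hσ : 0 < σ) (μ y : EuclideanSpace ℝ (Fin d)) :
    0 < gaussDen d σ μ y := by
  unfold gaussDen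
  have : (0:ℝ) < 2 * Real.pi * σ ^ 2 := by positivity
  positivity

lemma log_gaussDen (d : ℕ) {σ : ℝ} (hσ : 0 < σ) (μ y : EuclideanSpace ℝ (Fin d)) :
    Real.log (gaussDen d σ μ y)
      = (-(d:ℝ)/2) * Real.log (2 * Real.pi * σ ^ 2) - ‖y - μ‖ ^ 2 / (2 * σ ^ 2) := by
  have hc : (0:ℝ) < 2 * Real.pi * σ ^ 2 := by positivity
  unfold gaussDen
  rw [Real.log_mul (by positivity) (Real.exp_ne_zero _), Real.log_rpow hc, Real.log_exp]
  ring

lemma gaussDen_continuous (d : ℕ) (σ : ℝ) (μ : EuclideanSpace ℝ (Fin d)) :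
    Continuous fun y => gaussDen d σ μ y := by
  unfold gaussDen; fun_prop

lemma neg_one_le_mul_log {w : ℝ} (h0 : 0 ≤ w) (h1 : w ≤ 1) : -1 ≤ w * Real.log w := by
  rcases eq_or_lt_of_le h0 with h|h
  · simp [← h]
  · have hinv : Real.log w⁻¹ ≤ w⁻¹ - 1 := Real.log_le_sub_one_of_pos (by positivity)
    rw [Real.log_inv] at hinv
    have h2 := mul_le_mul_of_nonneg_left hinv h0
    have h3 : w * w⁻¹ = 1 := mul_inv_cancel₀ h.ne'
    nlinarith

lemma mul_log_nonpos' {w : ℝ} (h0 : 0 ≤ w) (h1 : w ≤ 1) : w * Real.log w ≤ 0 :=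
  mul_nonpos_of_nonneg_of_nonpos h0 (Real.log_nonpos h0 h1)

lemma sq_norm_lower {d : ℕ} (θk y : EuclideanSpace ℝ (Fin d)) :
    ‖θk‖^2 ≤ 2*‖y - θk‖^2 + 2*‖y‖^2 := by
  have h : ‖θk‖ ≤ ‖y - θk‖ + ‖y‖ := by
    calc ‖θk‖ = ‖y - (y - θk)‖ := by congr 1; abel
    _ ≤ ‖y‖ + ‖y - θk‖ := norm_sub_le _ _
    _ = ‖y - θk‖ + ‖y‖ := by ring
  nlinarith [norm_nonneg (y - θk), norm_nonneg y, norm_nonneg θk,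
    sq_nonneg (‖y - θk‖ - ‖y‖), mul_self_le_mul_self (norm_nonneg θk) h]

lemma term_ge (d : ℕ) {σ : ℝ} (hσ : 0 < σ) {a : ℝ} (ha : 0 < a) (ha1 : a < 1)
    (θk y : EuclideanSpace ℝ (Fin d)) {w : ℝ} (hw : w ∈ Set.Icc (0:ℝ) 1) :
    -1 - (d:ℝ)/2 * |Real.log (2*Real.pi*σ^2)| - ‖y‖^2/(2*σ^2)
      + ‖θk‖^2/(4*σ^2) * w
    ≤ w * (Real.log w - Real.log (a * gaussDen d σ θk y)) := by
  obtain ⟨hw0, hw1⟩ := hw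
  have hg := gaussDen_pos d hσ θk y
  rw [Real.log_mul ha.ne' hg.ne', log_gaussDen d hσ]
  set L := Real.log (2*Real.pi*σ^2) with hL
  have hA : -1 ≤ w * Real.log w := neg_one_le_mul_log hw0 hw1
  have hB : 0 ≤ w * (-Real.log a) :=
    mul_nonneg hw0 (by linarith [Real.log_neg ha ha1])
  have hC : -((d:ℝ)/2 * |L|) ≤ w * ((d:ℝ)/2 * L) := by
    have habs : |w * ((d:ℝ)/2 * L)| ≤ |(d:ℝ)/2 * L| := by
      rw [abs_mul]
      exact mul_le_of_le_one_left (abs_nonneg _) (by rwa [abs_of_nonneg hw0])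
    have heq : |(d:ℝ)/2 * L| = (d:ℝ)/2 * |L| := by
      rw [abs_mul, abs_of_nonneg (by positivity : (0:ℝ) ≤ (d:ℝ)/2)]
    linarith [neg_abs_le (w * ((d:ℝ)/2 * L))]
  have hσ2 : (0:ℝ) < σ^2 := by positivity
  have hD : ‖θk‖^2/(4*σ^2) * w - ‖y‖^2/(2*σ^2) ≤ w * (‖y - θk‖^2/(2*σ^2)) := by
    have h4 := sq_norm_lower θk y
    have h4' : ‖θk‖^2 * w - 2*‖y‖^2 ≤ 2*(w*‖y - θk‖^2) := by
      nlinarith [sq_nonneg (‖y‖), mul_le_mul_of_nonneg_left h4 hw0,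
        mul_nonneg hw0 (sq_nonneg ‖y - θk‖), sq_nonneg ‖y‖]
    have h5 : (‖θk‖^2 * w - 2*‖y‖^2) / (4*σ^2) ≤ (2*(w*‖y - θk‖^2)) / (4*σ^2) := by
      apply div_le_div_of_nonneg_right h4' (by positivity)
    calc ‖θk‖^2/(4*σ^2) * w - ‖y‖^2/(2*σ^2)
        = (‖θk‖^2 * w - 2*‖y‖^2) / (4*σ^2) := by ring
      _ ≤ (2*(w*‖y - θk‖^2)) / (4*σ^2) := h5
      _ = w * (‖y - θk‖^2/(2*σ^2)) := by ring
  have key : w * (Real.log w - (Real.log a + ((-(d:ℝ)/2) * L - ‖y - θk‖^2/(2*σ^2))))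
      = w * Real.log w + w * (-Real.log a) + w * ((d:ℝ)/2 * L)
        + w * (‖y - θk‖^2/(2*σ^2)) := by ring
  linarith [key]

lemma sq_norm_sub_le {d : ℕ} (θk y : EuclideanSpace ℝ (Fin d)) :
    ‖y - θk‖^2 ≤ 2*‖y‖^2 + 2*‖θk‖^2 := by
  have h : ‖y - θk‖ ≤ ‖y‖ + ‖θk‖ := norm_sub_le _ _
  nlinarith [sq_nonneg (‖y‖ - ‖θk‖), mul_self_le_mul_self (norm_nonneg (y - θk)) h,
    norm_nonneg (y - θk), norm_nonneg y, norm_nonneg θk]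

lemma term_abs_le (d : ℕ) {σ : ℝ} (hσ : 0 < σ) {a : ℝ} (ha : 0 < a)
    (θk y : EuclideanSpace ℝ (Fin d)) {w : ℝ} (hw : w ∈ Set.Icc (0:ℝ) 1) :
    |w * (Real.log w - Real.log (a * gaussDen d σ θk y))|
      ≤ 1 + |Real.log a| + (d:ℝ)/2 * |Real.log (2*Real.pi*σ^2)|
        + ‖θk‖^2/σ^2 + ‖y‖^2/σ^2 := by
  obtain ⟨hw0, hw1⟩ := hw
  have hg := gaussDen_pos d hσ θk y
  rw [Real.log_mul ha.ne' hg.ne', log_gaussDen d hσ]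
  set L := Real.log (2*Real.pi*σ^2) with hL
  have hwabs : |w| ≤ 1 := by rwa [abs_of_nonneg hw0]
  have hσ2 : (0:ℝ) < σ^2 := by positivity
  have h1 : |w * Real.log w| ≤ 1 := by
    have hA := neg_one_le_mul_log hw0 hw1
    have hB := mul_log_nonpos' hw0 hw1
    rw [abs_le]; constructor <;> linarith
  have h2 : |w * Real.log a| ≤ |Real.log a| := by
    rw [abs_mul]; exact mul_le_of_le_one_left (abs_nonneg _) hwabs
  have h3 : |w * ((-(d:ℝ)/2) * L)| ≤ (d:ℝ)/2 * |L| := by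
    have hdl : |(-(d:ℝ)/2) * L| = (d:ℝ)/2 * |L| := by
      rw [abs_mul]
      congr 1
      rw [abs_div, abs_neg, abs_two, abs_of_nonneg (show (0:ℝ) ≤ (d:ℝ) from Nat.cast_nonneg d)]
    rw [abs_mul, hdl]
    exact mul_le_of_le_one_left (by positivity) hwabs
  have h4 : |w * (‖y - θk‖^2/(2*σ^2))| ≤ ‖θk‖^2/σ^2 + ‖y‖^2/σ^2 := by
    rw [abs_mul, abs_of_nonneg (by positivity : (0:ℝ) ≤ ‖y - θk‖^2/(2*σ^2))]
    have h5 : |w| * (‖y - θk‖^2/(2*σ^2)) ≤ ‖y - θk‖^2/(2*σ^2) :=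
      mul_le_of_le_one_left (by positivity) hwabs
    have h6 : ‖y - θk‖^2/(2*σ^2) ≤ (2*‖y‖^2 + 2*‖θk‖^2)/(2*σ^2) :=
      div_le_div_of_nonneg_right (sq_norm_sub_le θk y) (by positivity)
    have h7 : (2*‖y‖^2 + 2*‖θk‖^2)/(2*σ^2) = ‖θk‖^2/σ^2 + ‖y‖^2/σ^2 := by ring
    linarith
  have key : w * (Real.log w - (Real.log a + ((-(d:ℝ)/2) * L - ‖y - θk‖^2/(2*σ^2))))
      = (w * Real.log w) + (-(w * Real.log a)) + (-(w * ((-(d:ℝ)/2) * L)))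
        + w * (‖y - θk‖^2/(2*σ^2)) := by ring
  rw [key]
  calc |(w * Real.log w) + (-(w * Real.log a)) + (-(w * ((-(d:ℝ)/2) * L)))
        + w * (‖y - θk‖^2/(2*σ^2))|
      ≤ |(w * Real.log w) + (-(w * Real.log a)) + (-(w * ((-(d:ℝ)/2) * L)))|
        + |w * (‖y - θk‖^2/(2*σ^2))| := abs_add_le _ _
    _ ≤ (|(w * Real.log w) + (-(w * Real.log a))| + |(-(w * ((-(d:ℝ)/2) * L)))|)
        + |w * (‖y - θk‖^2/(2*σ^2))| := by gcongr; exact abs_add_le _ _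
    _ ≤ ((|w * Real.log w| + |(-(w * Real.log a))|) + |(-(w * ((-(d:ℝ)/2) * L)))|)
        + |w * (‖y - θk‖^2/(2*σ^2))| := by gcongr; exact abs_add_le _ _
    _ ≤ 1 + |Real.log a| + (d:ℝ)/2 * |L| + (‖θk‖^2/σ^2 + ‖y‖^2/σ^2) := by
        rw [abs_neg, abs_neg]; gcongr
    _ = 1 + |Real.log a| + (d:ℝ)/2 * |L| + ‖θk‖^2/σ^2 + ‖y‖^2/σ^2 := by ring

lemma freeEnergy_lower (K d : ℕ) {σ : ℝ} (hσ : 0 < σ)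
    (α : Fin K → ℝ) (hα : ∀ k, α k ∈ Set.Ioo (0:ℝ) 1)
    (Q : Measure (EuclideanSpace ℝ (Fin d))) [IsProbabilityMeasure Q]
    (hQ : Integrable (fun y => ‖y‖ ^ 2) Q)
    (θ : Fin K → EuclideanSpace ℝ (Fin d))
    (w : EuclideanSpace ℝ (Fin d) → Fin K → ℝ) (hw : IsResp K d w)
    (hwc : ∀ k, ∫ y, w y k ∂Q = α k) :
    (K : ℝ) * (-1 - (d:ℝ)/2 * |Real.log (2*Real.pi*σ^2)| - (∫ y, ‖y‖^2 ∂Q) / (2*σ^2))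
      + ∑ k, ‖θ k‖^2 / (4*σ^2) * α k ≤ freeEnergy K d σ α Q w θ := by
  obtain ⟨hwm, hwb, hws⟩ := hw
  have w_int : ∀ k, Integrable (fun y => w y k) Q := by
    intro k
    refine Integrable.mono' (integrable_const 1) (hwm k).aestronglyMeasurable ?_
    filter_upwards with y
    rw [Real.norm_eq_abs, abs_of_nonneg (hwb y k).1]
    exact (hwb y k).2
  set G : Fin K → EuclideanSpace ℝ (Fin d) → ℝ :=
    fun k y => (-1 - (d:ℝ)/2 * |Real.log (2*Real.pi*σ^2)| - ‖y‖^2/(2*σ^2))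
      + ‖θ k‖^2/(4*σ^2) * w y k with hG
  have G_int : ∀ k, Integrable (G k) Q := fun k =>
    ((integrable_const _).sub (hQ.div_const _)).add ((w_int k).const_mul _)
  have G_val : ∀ k, ∫ y, G k y ∂Q
      = (-1 - (d:ℝ)/2 * |Real.log (2*Real.pi*σ^2)| - (∫ y, ‖y‖^2 ∂Q)/(2*σ^2))
        + ‖θ k‖^2/(4*σ^2) * α k := by
    intro k
    have i1 : Integrable (fun _ : EuclideanSpace ℝ (Fin d) =>
        (-1 - (d:ℝ)/2 * |Real.log (2*Real.pi*σ^2)| : ℝ)) Q := integrable_const _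
    have i2 : Integrable (fun y : EuclideanSpace ℝ (Fin d) => ‖y‖^2/(2*σ^2)) Q :=
      hQ.div_const _
    have i3 : Integrable (fun y => ‖θ k‖^2/(4*σ^2) * w y k) Q := (w_int k).const_mul _
    have e1 : ∫ y, G k y ∂Q
        = (∫ y, (-1 - (d:ℝ)/2 * |Real.log (2*Real.pi*σ^2)| - ‖y‖^2/(2*σ^2)) ∂Q)
          + ∫ y, ‖θ k‖^2/(4*σ^2) * w y k ∂Q := integral_add (i1.sub i2) i3
    have e2 : ∫ y, (-1 - (d:ℝ)/2 * |Real.log (2*Real.pi*σ^2)| - ‖y‖^2/(2*σ^2)) ∂Q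
        = (∫ _y : EuclideanSpace ℝ (Fin d),
            (-1 - (d:ℝ)/2 * |Real.log (2*Real.pi*σ^2)| : ℝ) ∂Q)
          - ∫ y, ‖y‖^2/(2*σ^2) ∂Q := integral_sub i1 i2
    have e3 : (∫ _y : EuclideanSpace ℝ (Fin d),
        (-1 - (d:ℝ)/2 * |Real.log (2*Real.pi*σ^2)| : ℝ) ∂Q)
        = -1 - (d:ℝ)/2 * |Real.log (2*Real.pi*σ^2)| := by simp
    have e4 : ∫ y, ‖y‖^2/(2*σ^2) ∂Q = (∫ y, ‖y‖^2 ∂Q)/(2*σ^2) := integral_div _ _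
    have e5 : ∫ y, ‖θ k‖^2/(4*σ^2) * w y k ∂Q = ‖θ k‖^2/(4*σ^2) * α k := by
      rw [integral_const_mul, hwc k]
    rw [e1, e2, e3, e4, e5]
  have f_meas : Measurable (fun y =>
      ∑ k, w y k * (Real.log (w y k) - Real.log (α k * gaussDen d σ (θ k) y))) := by
    apply Finset.measurable_sum
    intro k _
    exact (hwm k).mul (((hwm k).log).sub
      ((measurable_const.mul (gaussDen_continuous d σ (θ k)).measurable).log))
  have f_int : Integrable (fun y =>
      ∑ k, w y k * (Real.log (w y k) - Real.log (α k * gaussDen d σ (θ k) y))) Q := by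
    have bound_int : Integrable (fun y => ∑ k : Fin K,
        (1 + |Real.log (α k)| + (d:ℝ)/2 * |Real.log (2*Real.pi*σ^2)|
          + ‖θ k‖^2/σ^2 + ‖y‖^2/σ^2)) Q := by
      apply integrable_finset_sum
      intro k _
      exact (integrable_const _).add (hQ.div_const _)
    refine Integrable.mono' bound_int f_meas.aestronglyMeasurable ?_
    filter_upwards with y
    rw [Real.norm_eq_abs]
    calc |∑ k, w y k * (Real.log (w y k) - Real.log (α k * gaussDen d σ (θ k) y))|
        ≤ ∑ k, |w y k * (Real.log (w y k) - Real.log (α k * gaussDen d σ (θ k) y))| :=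
          Finset.abs_sum_le_sum_abs _ _
      _ ≤ _ := Finset.sum_le_sum fun k _ =>
          term_abs_le d hσ (hα k).1 (θ k) y (hwb y k)
  have hpt : ∀ y, (∑ k, G k y)
      ≤ ∑ k, w y k * (Real.log (w y k) - Real.log (α k * gaussDen d σ (θ k) y)) :=
    fun y => Finset.sum_le_sum fun k _ => term_ge d hσ (hα k).1 (hα k).2 (θ k) y (hwb y k)
  calc (K : ℝ) * (-1 - (d:ℝ)/2 * |Real.log (2*Real.pi*σ^2)| - (∫ y, ‖y‖^2 ∂Q) / (2*σ^2))
      + ∑ k, ‖θ k‖^2 / (4*σ^2) * α k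
      = ∑ k, ∫ y, G k y ∂Q := by
        simp only [G_val, Finset.sum_add_distrib, Finset.sum_const, Finset.card_univ,
          Fintype.card_fin, nsmul_eq_mul]
    _ = ∫ y, ∑ k, G k y ∂Q := (integral_finset_sum _ fun k _ => G_int k).symm
    _ ≤ _ := integral_mono (integrable_finset_sum _ fun k _ => G_int k) f_int hpt

/-- the entropic OT loss is coercive: it tends to `+∞` along the
cocompact filter on `(ℝ^d)^K` (equivalently, `𝓛(θ_n) → ∞` whenever `‖θ_n‖ → ∞`). -/
theorem entLoss_coercive
    (K d : ℕ) (hK : 1 ≤ K) (hd : 1 ≤ d) (σ : ℝ) (hσ : 0 < σ)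
    (α : Fin K → ℝ) (hα : ∀ k, α k ∈ Set.Ioo (0 : ℝ) 1) (hαsum : ∑ k, α k = 1)
    (Q : Measure (EuclideanSpace ℝ (Fin d))) [IsProbabilityMeasure Q]
    (hQ : Integrable (fun y => ‖y‖ ^ 2) Q) :
    Filter.Tendsto (entLoss K d σ α Q)
      (Filter.cocompact (Fin K → EuclideanSpace ℝ (Fin d))) Filter.atTop := by
  haveI : Nonempty (Fin K) := ⟨⟨0, hK⟩⟩
  set M : ℝ := ∫ y, ‖y‖^2 ∂Q with hM
  set A : ℝ := (K:ℝ) * (-1 - (d:ℝ)/2 * |Real.log (2*Real.pi*σ^2)| - M/(2*σ^2)) with hA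
  set amin : ℝ := Finset.univ.inf' Finset.univ_nonempty α with hamin_def
  have hamin : 0 < amin := by
    rw [hamin_def, Finset.lt_inf'_iff]
    exact fun k _ => (hα k).1
  have hamin_le : ∀ k, amin ≤ α k := fun k => Finset.inf'_le _ (Finset.mem_univ k)
  have hc : 0 < amin/(4*σ^2) := by positivity
  have hlb : ∀ θ, A + amin/(4*σ^2) * ‖θ‖^2 ≤ entLoss K d σ α Q θ := by
    intro θ
    obtain ⟨k₀, -, hk₀⟩ := Finset.exists_mem_eq_sup Finset.univ Finset.univ_nonempty
      (fun k => ‖θ k‖₊)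
    have hnorm : ‖θ‖ = ‖θ k₀‖ := by
      rw [Pi.norm_def, hk₀, coe_nnnorm]
    have hsum : amin/(4*σ^2) * ‖θ‖^2 ≤ ∑ k, ‖θ k‖^2/(4*σ^2) * α k := by
      have h1 : amin/(4*σ^2) * ‖θ‖^2 ≤ ‖θ k₀‖^2/(4*σ^2) * α k₀ := by
        rw [hnorm]
        have hm : amin * ‖θ k₀‖^2 ≤ α k₀ * ‖θ k₀‖^2 :=
          mul_le_mul_of_nonneg_right (hamin_le k₀) (sq_nonneg _)
        calc amin/(4*σ^2) * ‖θ k₀‖^2 = amin * ‖θ k₀‖^2 / (4*σ^2) := by ring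
          _ ≤ α k₀ * ‖θ k₀‖^2/(4*σ^2) := div_le_div_of_nonneg_right hm (by positivity)
          _ = ‖θ k₀‖^2/(4*σ^2) * α k₀ := by ring
      refine h1.trans (Finset.single_le_sum (f := fun k => ‖θ k‖^2/(4*σ^2) * α k)
        (fun k _ => ?_) (Finset.mem_univ k₀))
      exact mul_nonneg (by positivity) (hα k).1.le
    rw [entLoss]
    apply le_csInf
    · refine ⟨freeEnergy K d σ α Q (fun _ k => α k) θ, (fun _ k => α k),
        ⟨fun k => measurable_const, fun y k => ⟨(hα k).1.le, (hα k).2.le⟩,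
          fun y => hαsum⟩, fun k => by simp, rfl⟩
    · rintro b ⟨w, hw, hwc, rfl⟩
      have hfe := freeEnergy_lower K d hσ α hα Q hQ θ w hw hwc
      rw [hA]
      linarith [hsum, hfe]
  have htends : Filter.Tendsto
      (fun θ : Fin K → EuclideanSpace ℝ (Fin d) => A + amin/(4*σ^2) * ‖θ‖^2)
      (Filter.cocompact _) Filter.atTop := by
    have h1 : Filter.Tendsto (fun t : ℝ => A + amin/(4*σ^2) * t^2)
        Filter.atTop Filter.atTop := by
      apply Filter.tendsto_atTop_add_const_left
      exact (Filter.tendsto_pow_atTop two_ne_zero).const_mul_atTop hc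
    exact h1.comp tendsto_norm_cocompact_atTop
  exact Filter.tendsto_atTop_mono hlb htends
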